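/- arXiv:2008.06137 — 3 statements merged into one kernel-verified Lean document; each statement's English description precedes it below -/
import Mathlib

section
/- Let m be a positive integer, let m' > 0 and α > 0 be real numbers, and let O_{N,N}(α) = ∫₀^∞ f_G(x, m') (∫₀^{αx} f_G(y, m) dy) dx be the probability that a unit-mean Gamma variable with shape m is less than α times an independent unit-mean Gamma variable with shape m'. Then O_{N,N}(α) = 1 − (m'^{m'} / Γ(m')) · Σ_{k=0}^{m−1} (m α)^k Γ(k + m') / (k! · (m' + m α)^{k + m'}). -/
open Real MeasureTheory

/-- Unit-mean Nakagami-m (Gamma) density with shape parameter `s`. -/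
noncomputable def fG (s x : ℝ) : ℝ :=
  if 0 < x then s ^ s * x ^ (s - 1) * Real.exp (-s * x) / Real.Gamma s else 0

/-!
Conditioning on the interfering power `x`, the desired power has an Erlang distribution
(integer shape `m`), whose CDF at `t` is `1 - e^{-m t} ∑_{k<m} (m t)^k / k!`. The outage
probability is therefore `1` minus a finite sum of Gamma-tilted moments
`∫ f_G(x, m') x^k e^{-β x} dx = m'^{m'} Γ(k + m') / (Γ(m') (m' + β)^{k + m'})`.
-/

open Finset Set Nat

lemma integrableOn_rpow_mul_exp_neg_mul {a r : ℝ} (ha : 0 < a) (hr : 0 < r) :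
    IntegrableOn (fun x : ℝ => x ^ (a - 1) * exp (-(r * x))) (Ioi 0) :=
  .of_integral_ne_zero (by rw [integral_rpow_mul_exp_neg_mul_Ioi ha hr]; positivity)

lemma integral_rpow_mul_exp_neg_mul_Ioi_eq_div {a r : ℝ} (ha : 0 < a) (hr : 0 < r) :
    ∫ x in Ioi (0 : ℝ), x ^ (a - 1) * exp (-(r * x)) = Gamma a / r ^ a := by
  rw [integral_rpow_mul_exp_neg_mul_Ioi ha hr, one_div, inv_rpow hr.le, div_eq_inv_mul]

section Moments

variable {s β : ℝ}

lemma fG_mul_pow_mul_exp_neg_mul {x : ℝ} (k : ℕ) (hx : 0 < x) :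
    fG s x * (x ^ k * exp (-(β * x))) =
      s ^ s / Gamma s * (x ^ ((k + s) - 1) * exp (-((s + β) * x))) := by
  rw [fG, if_pos hx, add_sub_assoc, rpow_add hx, rpow_natCast, add_mul, neg_add, exp_add]
  ring_nf

lemma integrableOn_fG_mul_pow_mul_exp_neg_mul (k : ℕ) (hs : 0 < s) (hβ : 0 ≤ β) :
    IntegrableOn (fun x => fG s x * (x ^ k * exp (-(β * x)))) (Ioi 0) :=
  IntegrableOn.congr_fun
    ((integrableOn_rpow_mul_exp_neg_mul (by positivity) (by positivity)).const_mul _)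
    (fun _ hx => (fG_mul_pow_mul_exp_neg_mul k hx).symm) measurableSet_Ioi

lemma integral_fG_mul_pow_mul_exp_neg_mul (k : ℕ) (hs : 0 < s) (hβ : 0 ≤ β) :
    ∫ x in Ioi (0 : ℝ), fG s x * (x ^ k * exp (-(β * x))) =
      s ^ s / Gamma s * (Gamma (k + s) / (s + β) ^ ((k : ℝ) + s)) := by
  rw [setIntegral_congr_fun measurableSet_Ioi (fun _ hx => fG_mul_pow_mul_exp_neg_mul k hx),
    integral_const_mul,
    integral_rpow_mul_exp_neg_mul_Ioi_eq_div (by positivity) (by positivity)]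

lemma integrableOn_fG (hs : 0 < s) : IntegrableOn (fG s) (Ioi 0) := by
  simpa using integrableOn_fG_mul_pow_mul_exp_neg_mul (β := 0) 0 hs le_rfl

lemma integral_fG (hs : 0 < s) : ∫ x in Ioi (0 : ℝ), fG s x = 1 := by
  have h := integral_fG_mul_pow_mul_exp_neg_mul (β := 0) 0 hs le_rfl
  simp only [pow_zero, mul_one, zero_mul, neg_zero, exp_zero, CharP.cast_eq_zero, zero_add,
    add_zero] at h
  have hΓ := Gamma_pos_of_pos hs
  rw [h]
  field_simp

end Moments

section ErlangCDF

variable (c : ℝ)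

lemma hasDerivAt_sum_range_pow_div_factorial (y : ℝ) (n : ℕ) :
    HasDerivAt (fun y => ∑ k ∈ range (n + 1), (c * y) ^ k / k !)
      (c * ∑ k ∈ range n, (c * y) ^ k / k !) y := by
  induction n with
  | zero => simpa using hasDerivAt_const y (1 : ℝ)
  | succ n ih =>
    have hpow : HasDerivAt (fun y => (c * y) ^ (n + 1) / (n + 1)!) (c * ((c * y) ^ n / n !)) y := by
      refine ((((hasDerivAt_id' y).const_mul c).fun_pow (n + 1)).div_const
        ((n + 1)! : ℝ)).congr_deriv ?_
      rw [factorial_succ]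
      push_cast
      field_simp
    simp_rw [sum_range_succ _ (n + 1)]
    refine (ih.fun_add hpow).congr_deriv ?_
    rw [sum_range_succ, mul_add]

lemma hasDerivAt_exp_neg_mul_mul_sum_range_pow_div_factorial (y : ℝ) (n : ℕ) :
    HasDerivAt (fun y => exp (-(c * y)) * ∑ k ∈ range (n + 1), (c * y) ^ k / k !)
      (-(c * exp (-(c * y)) * ((c * y) ^ n / n !))) y := by
  have hexp : HasDerivAt (fun y => exp (-(c * y))) (exp (-(c * y)) * -c) y := by
    simpa using ((hasDerivAt_id y).const_mul c).neg.exp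
  refine (hexp.mul (hasDerivAt_sum_range_pow_div_factorial c y n)).congr_deriv ?_
  rw [sum_range_succ]
  ring

end ErlangCDF

lemma fG_natCast_succ_of_pos (n : ℕ) {y : ℝ} (hy : 0 < y) :
    fG ((n + 1 : ℕ) : ℝ) y =
      (n + 1 : ℕ) * exp (-((n + 1 : ℕ) * y)) * (((n + 1 : ℕ) * y) ^ n / n !) := by
  rw [fG, if_pos hy, show ((n + 1 : ℕ) : ℝ) - 1 = n by push_cast; ring, rpow_natCast,
    rpow_natCast, Nat.cast_succ, Gamma_nat_eq_factorial, mul_pow, pow_succ, neg_mul]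
  ring

lemma setIntegral_fG_natCast_Ioo {m : ℕ} (hm : 0 < m) {t : ℝ} (ht : 0 ≤ t) :
    ∫ y in Ioo 0 t, fG m y = 1 - exp (-(m * t)) * ∑ k ∈ range m, (m * t) ^ k / k ! := by
  obtain ⟨n, rfl⟩ : ∃ n, m = n + 1 := ⟨m - 1, (succ_pred_eq_of_pos hm).symm⟩
  set c : ℝ := ((n + 1 : ℕ) : ℝ)
  have hF : ∀ y ∈ uIcc 0 t, HasDerivAt
      (fun y => -(exp (-(c * y)) * ∑ k ∈ range (n + 1), (c * y) ^ k / k !))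
      (c * exp (-(c * y)) * ((c * y) ^ n / n !)) y := fun y _ => by
    simpa using (hasDerivAt_exp_neg_mul_mul_sum_range_pow_div_factorial c y n).fun_neg
  have hcont : IntervalIntegrable (fun y => c * exp (-(c * y)) * ((c * y) ^ n / n !)) volume 0 t :=
    (by fun_prop : Continuous _).intervalIntegrable _ _
  rw [setIntegral_congr_fun measurableSet_Ioo (fun y hy =>
      fG_natCast_succ_of_pos n hy.1), ← integral_Ioc_eq_integral_Ioo,
    ← intervalIntegral.integral_of_le ht, intervalIntegral.integral_eq_sub_of_hasDerivAt hF hcont]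
  have hsum_zero : ∑ k ∈ range (n + 1), (0 : ℝ) ^ k / k ! = 1 := by simp [sum_range_succ']
  simp only [mul_zero, neg_zero, exp_zero, one_mul, hsum_zero]
  ring

/-- Lemma 3: outage probability when both the desired and the interfering links are
NLoS Nakagami with shape factors `m` (a positive integer) and `m' > 0`. -/
theorem outage_N_N (m : ℕ) (hm : 0 < m) (m' α : ℝ) (hm' : 0 < m') (hα : 0 < α) :
    (∫ x in Set.Ioi (0 : ℝ), fG m' x * ∫ y in Set.Ioo 0 (α * x), fG (m : ℝ) y) =
      1 - (m' ^ m' / Real.Gamma m') *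
        ∑ k ∈ Finset.range m,
          ((m : ℝ) * α) ^ k * Real.Gamma (k + m') /
            ((Nat.factorial k) * (m' + (m : ℝ) * α) ^ ((k : ℝ) + m')) := by
  have hβ : 0 ≤ (m : ℝ) * α := by positivity
  have hterm (k : ℕ) := (integrableOn_fG_mul_pow_mul_exp_neg_mul k hm' hβ).const_mul
    (((m : ℝ) * α) ^ k / k !)
  have hconditioned : ∀ x ∈ Ioi (0 : ℝ), fG m' x * ∫ y in Ioo 0 (α * x), fG (m : ℝ) y =
      fG m' x - ∑ k ∈ range m,
        ((m : ℝ) * α) ^ k / k ! * (fG m' x * (x ^ k * exp (-((m * α) * x)))) := fun x hx => by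
    rw [setIntegral_fG_natCast_Ioo hm (mul_pos hα hx).le, mul_sub, mul_one,
      mul_sum, mul_sum, ← mul_assoc (m : ℝ) α x]
    congr 1
    refine sum_congr rfl fun k _ => ?_
    ring
  rw [setIntegral_congr_fun measurableSet_Ioi hconditioned,
    integral_sub (integrableOn_fG hm') (integrable_finsetSum _ fun k _ => hterm k),
    integral_finsetSum _ fun k _ => hterm k, integral_fG hm', mul_sum]
  simp_rw [integral_const_mul, integral_fG_mul_pow_mul_exp_neg_mul _ hm' hβ]
  congr 1
  refine sum_congr rfl fun k _ => ?_
  field_simp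
end

section
/- Let m be a positive integer, K ≥ 0 and α > 0 real numbers, and set θ₀ = α(K+1)/(m + α(K+1)) ∈ (0,1). Then O_{L,N}(α) = ∫₀^∞ f_G(x, m) (∫₀^{αx} f_R(y, K) dy) dx satisfies O_{L,N}(α) = 1 − (m^m e^{−K} / (Γ(m) (m + α(K+1))^m)) · D^{m−1}[ θ ↦ θ^{m−1} (e^K − θ e^{Kθ}) / (1 − θ) ](θ₀), where D^{m−1} denotes the (m−1)-st derivative with respect to θ. -/
open Real MeasureTheory

/-- Modified Bessel function of the first kind of order zero. -/
noncomputable def besselI0 (z : ℝ) : ℝ :=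
  ∑' k : ℕ, (z / 2) ^ (2 * k) / ((Nat.factorial k : ℝ)) ^ 2

/-- Unit-mean Rician density with shape factor `K`. -/
noncomputable def fR (K y : ℝ) : ℝ :=
  if 0 < y then
    (K + 1) * Real.exp (-K - (K + 1) * y) * besselI0 (Real.sqrt (4 * K * (K + 1) * y))
  else 0

/-!
Expanding `I₀` shows that the Rician density is a Poisson(`K`) mixture of the Gamma(`k + 1`,
`K + 1`) densities, whose distribution functions are `1 - P(Poisson((K + 1) t) ≤ k)`. Integrating
these against the Nakagami density with `m = n + 1` term by term gives
`O = 1 - C e^{-K} ∑ₖ Kᵏ/k! ∑_{j ≤ k} (n + j)!/j! θ₀ʲ` with `C = mᵐ / (n! (m + α(K + 1))ᵐ)`.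
On the other side `θⁿ (e^K - θ e^{Kθ}) / (1 - θ) = ∑ₖ Kᵏ/k! ∑_{j ≤ k} θ^{n+j}` for `θ ≠ 1`, and on
`(-1, 1)` the series may be differentiated `n` times termwise, which produces the same double series
at `θ₀`.
-/

open Finset Filter Topology
open scoped Nat

theorem hasSum_pow_div_factorial_exp (x : ℝ) : HasSum (fun k => x ^ k / k !) (exp x) := by
  simpa [← Real.exp_eq_exp_ℝ] using NormedSpace.expSeries_div_hasSum_exp x

theorem iteratedDeriv_tsum_of_isPreconnected {ι 𝕜 F : Type*} [NontriviallyNormedField 𝕜]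
    [IsRCLikeNormedField 𝕜] [NormedAddCommGroup F] [NormedSpace 𝕜 F] [CompleteSpace F]
    {f : ι → 𝕜 → F} {u : ι → ℝ} {s : Set 𝕜} {n : ℕ} (hu : Summable u) (hs : IsOpen s)
    (h's : IsPreconnected s) (hf : ∀ i, ContDiff 𝕜 n (f i))
    (hfu : ∀ N ≤ n, ∀ i, ∀ x ∈ s, ‖iteratedDeriv N (f i) x‖ ≤ u i) {x : 𝕜} (hx : x ∈ s) :
    iteratedDeriv n (fun y => ∑' i, f i y) x = ∑' i, iteratedDeriv n (f i) x := by
  suffices ∀ N ≤ n, Set.EqOn (iteratedDeriv N (fun y => ∑' i, f i y))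
      (fun y => ∑' i, iteratedDeriv N (f i) y) s from this n le_rfl hx
  intro N
  induction N with
  | zero => intro _ y _; simp
  | succ N ih =>
    intro hN y hy
    have hderiv : HasDerivAt (fun z => ∑' i, iteratedDeriv N (f i) z)
        (∑' i, iteratedDeriv (N + 1) (f i) y) y := by
      refine hasDerivAt_tsum_of_isPreconnected hu hs h's (fun i z _ => ?_) (hfu (N + 1) hN) hy
        (.of_norm_bounded hu fun i => hfu N (by omega) i y hy) hy
      rw [iteratedDeriv_succ]
      exact ((hf i).differentiable_iteratedDeriv N (by exact_mod_cast hN)).differentiableAt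
        |>.hasDerivAt
    rw [iteratedDeriv_succ, ((ih (by omega)).eventuallyEq_of_mem (hs.mem_nhds hy)).deriv_eq]
    exact hderiv.deriv

theorem sum_range_descFactorial_le {n N : ℕ} (hN : N ≤ n) (k : ℕ) :
    ∑ j ∈ range (k + 1), (n + j).descFactorial N ≤ n ! * 2 ^ n * 4 ^ k :=
  calc ∑ j ∈ range (k + 1), (n + j).descFactorial N
      ≤ ∑ j ∈ range (k + 1), n ! * 2 ^ (n + k) := by
        refine sum_le_sum fun j hj => ?_
        rw [Nat.descFactorial_eq_factorial_mul_choose]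
        exact Nat.mul_le_mul (Nat.factorial_le hN)
          ((Nat.choose_le_two_pow _ _).trans (Nat.pow_le_pow_right two_pos (by simp at hj; omega)))
    _ ≤ 2 ^ k * (n ! * 2 ^ (n + k)) := by
        rw [sum_const, card_range, smul_eq_mul]
        exact Nat.mul_le_mul_right _ Nat.lt_two_pow_self
    _ = n ! * 2 ^ n * 4 ^ k := by
        rw [show (4 : ℕ) = 2 * 2 from rfl, mul_pow, pow_add]; ring

theorem norm_pow_div_factorial_mul_sum_descFactorial_le {n N : ℕ} (hN : N ≤ n) (K : ℝ) (k : ℕ)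
    (e : ℕ → ℕ) {θ : ℝ} (hθ : |θ| ≤ 1) :
    ‖K ^ k / k ! * ∑ j ∈ range (k + 1), ((n + j).descFactorial N : ℝ) * θ ^ e j‖
      ≤ n ! * 2 ^ n * ((4 * |K|) ^ k / k !) := by
  have hsum : ‖∑ j ∈ range (k + 1), ((n + j).descFactorial N : ℝ) * θ ^ e j‖
      ≤ n ! * 2 ^ n * 4 ^ k := by
    refine (norm_sum_le _ _).trans ?_
    calc ∑ j ∈ range (k + 1), ‖((n + j).descFactorial N : ℝ) * θ ^ e j‖
        ≤ ∑ j ∈ range (k + 1), ((n + j).descFactorial N : ℝ) := by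
          refine sum_le_sum fun j _ => ?_
          rw [norm_mul, norm_pow, Real.norm_natCast]
          exact mul_le_of_le_one_right (by positivity) (pow_le_one₀ (abs_nonneg θ) hθ)
      _ ≤ n ! * 2 ^ n * 4 ^ k := by exact_mod_cast sum_range_descFactorial_le hN k
  calc ‖K ^ k / k ! * ∑ j ∈ range (k + 1), ((n + j).descFactorial N : ℝ) * θ ^ e j‖
      ≤ |K| ^ k / k ! * (n ! * 2 ^ n * 4 ^ k) := by
        rw [norm_mul, norm_div, norm_pow, Real.norm_natCast, Real.norm_eq_abs]
        gcongr
    _ = n ! * 2 ^ n * ((4 * |K|) ^ k / k !) := by ring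

theorem summable_pow_div_factorial_mul_sum_descFactorial {n N : ℕ} (hN : N ≤ n) (K : ℝ)
    (e : ℕ → ℕ) {θ : ℝ} (hθ : |θ| ≤ 1) :
    Summable fun k => K ^ k / k ! * ∑ j ∈ range (k + 1), ((n + j).descFactorial N : ℝ) * θ ^ e j :=
  .of_norm_bounded ((Real.summable_pow_div_factorial _).mul_left _)
    fun k => norm_pow_div_factorial_mul_sum_descFactorial_le hN K k e hθ

theorem iteratedDeriv_const_mul_sum_pow {𝕜 : Type*} [NontriviallyNormedField 𝕜] (c : 𝕜)
    (n k N : ℕ) (θ : 𝕜) :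
    iteratedDeriv N (fun θ => c * ∑ j ∈ range (k + 1), θ ^ (n + j)) θ
      = c * ∑ j ∈ range (k + 1), ((n + j).descFactorial N : 𝕜) * θ ^ (n + j - N) := by
  rw [iteratedDeriv_const_mul_field, iteratedDeriv_fun_sum fun j _ => by fun_prop]
  simp [iteratedDeriv_pow]

theorem hasSum_pow_div_factorial_mul_sum_pow (n : ℕ) (K : ℝ) {θ : ℝ} (hθ : θ ≠ 1) :
    HasSum (fun k => K ^ k / k ! * ∑ j ∈ range (k + 1), θ ^ (n + j))
      (θ ^ n * (exp K - θ * exp (K * θ)) / (1 - θ)) := by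
  have hθ' : 1 - θ ≠ 0 := sub_ne_zero.mpr hθ.symm
  have hterm : (fun k => K ^ k / k ! * ∑ j ∈ range (k + 1), θ ^ (n + j))
      = fun k => θ ^ n * (K ^ k / (k ! : ℝ) - θ * ((K * θ) ^ k / k !)) / (1 - θ) := by
    funext k
    simp_rw [pow_add, ← mul_sum, geom_sum_eq hθ, mul_pow]
    field_simp
    ring
  rw [hterm]
  exact (((hasSum_pow_div_factorial_exp K).sub
    ((hasSum_pow_div_factorial_exp (K * θ)).mul_left θ)).mul_left (θ ^ n)).div_const (1 - θ)

theorem iteratedDeriv_eq_tsum_descFactorial (n : ℕ) (K : ℝ) {θ : ℝ} (hθ : θ ∈ Set.Ioo (-1) 1) :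
    iteratedDeriv n (fun θ : ℝ => θ ^ n * (exp K - θ * exp (K * θ)) / (1 - θ)) θ
      = ∑' k, K ^ k / k ! * ∑ j ∈ range (k + 1), ((n + j).descFactorial n : ℝ) * θ ^ j := by
  have hseries : (fun θ : ℝ => θ ^ n * (exp K - θ * exp (K * θ)) / (1 - θ))
      =ᶠ[𝓝 θ] fun θ => ∑' k, K ^ k / k ! * ∑ j ∈ range (k + 1), θ ^ (n + j) := by
    filter_upwards [isOpen_Ioo.mem_nhds hθ] with y hy
    exact ((hasSum_pow_div_factorial_mul_sum_pow n K hy.2.ne).tsum_eq).symm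
  have habs : ∀ y ∈ Set.Ioo (-1 : ℝ) 1, |y| ≤ 1 := fun y hy => abs_le.mpr ⟨hy.1.le, hy.2.le⟩
  rw [hseries.iteratedDeriv_eq, iteratedDeriv_tsum_of_isPreconnected
    ((Real.summable_pow_div_factorial (4 * |K|)).mul_left (n ! * 2 ^ n : ℝ)) isOpen_Ioo
    isPreconnected_Ioo (fun k => by fun_prop) (fun N hN k y hy => ?_) hθ]
  · simp_rw [iteratedDeriv_const_mul_sum_pow, Nat.add_sub_cancel_left]
  · rw [iteratedDeriv_const_mul_sum_pow]
    exact norm_pow_div_factorial_mul_sum_descFactorial_le hN K k _ (habs y hy)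

theorem integral_tsum_of_nonneg {α ι : Type*} [MeasurableSpace α] [Countable ι] {μ : Measure α}
    {f : ι → α → ℝ} (hf : ∀ i, Integrable (f i) μ) (hf₀ : ∀ i, 0 ≤ᵐ[μ] f i)
    (hs : Summable fun i => ∫ a, f i a ∂μ) :
    ∫ a, ∑' i, f i a ∂μ = ∑' i, ∫ a, f i a ∂μ :=
  (integral_tsum_of_summable_integral_norm hf <| hs.congr fun i =>
    integral_congr_ae <| (hf₀ i).mono fun _ ha => (Real.norm_of_nonneg ha).symm).symm

theorem integral_pow_mul_exp_neg_mul_Ioi (N : ℕ) {b : ℝ} (hb : 0 < b) :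
    ∫ x in Set.Ioi (0 : ℝ), x ^ N * exp (-(b * x)) = N ! / b ^ (N + 1) := by
  have h := Real.integral_rpow_mul_exp_neg_mul_Ioi (a := N + 1) (by positivity) hb
  simp only [add_sub_cancel_right, Real.rpow_natCast, Real.Gamma_nat_eq_factorial] at h
  rw [h, ← Nat.cast_add_one, Real.rpow_natCast, one_div, inv_pow]
  ring

theorem integrableOn_pow_mul_exp_neg_mul_Ioi (N : ℕ) {b : ℝ} (hb : 0 < b) :
    IntegrableOn (fun x => x ^ N * exp (-(b * x))) (Set.Ioi 0) :=
  Integrable.of_integral_ne_zero (by rw [integral_pow_mul_exp_neg_mul_Ioi N hb]; positivity)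

noncomputable def poissonCDF (s : ℝ) (k : ℕ) : ℝ :=
  exp (-s) * ∑ j ∈ range (k + 1), s ^ j / j !

theorem poissonCDF_zero (k : ℕ) : poissonCDF 0 k = 1 := by
  simp [poissonCDF, sum_range_succ']

theorem poissonCDF_nonneg {s : ℝ} (hs : 0 ≤ s) (k : ℕ) : 0 ≤ poissonCDF s k := by
  unfold poissonCDF
  positivity

theorem poissonCDF_le_one {s : ℝ} (hs : 0 ≤ s) (k : ℕ) : poissonCDF s k ≤ 1 :=
  calc poissonCDF s k ≤ exp (-s) * exp s :=
        mul_le_mul_of_nonneg_left (Real.sum_le_exp_of_nonneg hs _) (exp_nonneg _)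
    _ = 1 := by rw [← exp_add, neg_add_cancel, exp_zero]

theorem hasDerivAt_poissonCDF (s : ℝ) (k : ℕ) :
    HasDerivAt (fun s => poissonCDF s k) (-(exp (-s) * s ^ k / k !)) s := by
  induction k with
  | zero => simpa [poissonCDF] using (hasDerivAt_neg s).exp
  | succ k ih =>
    have hnew : HasDerivAt (fun s => exp (-s) * s ^ (k + 1) / (k + 1)!)
        ((-exp (-s) * s ^ (k + 1) + exp (-s) * ((k + 1 : ℕ) * s ^ k)) / (k + 1)!) s := by
      refine (((hasDerivAt_neg s).exp.mul (hasDerivAt_pow (k + 1) s)).div_const _).congr_deriv ?_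
      push_cast
      ring
    have hsucc : (fun s => poissonCDF s (k + 1))
        = fun s => poissonCDF s k + exp (-s) * s ^ (k + 1) / (k + 1)! := by
      funext s
      rw [poissonCDF, sum_range_succ, poissonCDF]
      ring
    rw [hsucc]
    refine (ih.add hnew).congr_deriv ?_
    rw [Nat.factorial_succ]
    push_cast
    field_simp
    ring

theorem integral_Ioo_pow_mul_exp_neg_mul (c : ℝ) (k : ℕ) {t : ℝ} (ht : 0 ≤ t) :
    ∫ y in Set.Ioo 0 t, c ^ (k + 1) * y ^ k * exp (-(c * y)) / k ! = 1 - poissonCDF (c * t) k := by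
  have hderiv : ∀ y, HasDerivAt (fun y => -poissonCDF (c * y) k)
      (c ^ (k + 1) * y ^ k * exp (-(c * y)) / k !) y := fun y => by
    refine ((hasDerivAt_poissonCDF (c * y) k).comp y
      ((hasDerivAt_id y).const_mul c)).neg.congr_deriv ?_
    simp only [mul_one]
    ring
  rw [← integral_Ioc_eq_integral_Ioo, ← intervalIntegral.integral_of_le ht,
    intervalIntegral.integral_eq_sub_of_hasDerivAt (fun y _ => hderiv y)
      (Continuous.intervalIntegrable (by fun_prop) _ _), mul_zero, poissonCDF_zero]
  ring

theorem fR_eq_tsum {K y : ℝ} (hK : 0 ≤ K) (hy : 0 < y) :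
    fR K y = ∑' k, exp (-K) * (K ^ k / k !) *
      ((K + 1) ^ (k + 1) * y ^ k * exp (-((K + 1) * y)) / k !) := by
  have hsq : ∀ k : ℕ, (√(4 * K * (K + 1) * y) / 2) ^ (2 * k) = (K * (K + 1) * y) ^ k := fun k => by
    rw [pow_mul, div_pow, Real.sq_sqrt (by positivity)]
    ring
  rw [fR, if_pos hy, besselI0, ← tsum_mul_left]
  refine tsum_congr fun k => ?_
  rw [hsq, show -K - (K + 1) * y = -K + -((K + 1) * y) by ring, exp_add, mul_pow, mul_pow]
  ring

theorem integral_Ioo_fR {K t : ℝ} (hK : 0 ≤ K) (ht : 0 ≤ t) :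
    ∫ y in Set.Ioo 0 t, fR K y
      = ∑' k, exp (-K) * (K ^ k / k !) * (1 - poissonCDF ((K + 1) * t) k) := by
  have hvalue : ∀ k : ℕ, ∫ y in Set.Ioo 0 t, exp (-K) * (K ^ k / k !) *
      ((K + 1) ^ (k + 1) * y ^ k * exp (-((K + 1) * y)) / k !)
        = exp (-K) * (K ^ k / k !) * (1 - poissonCDF ((K + 1) * t) k) := fun k => by
    rw [integral_const_mul, integral_Ioo_pow_mul_exp_neg_mul _ _ ht]
  have hint : ∀ k : ℕ, IntegrableOn (fun y => exp (-K) * (K ^ k / k !) *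
      ((K + 1) ^ (k + 1) * y ^ k * exp (-((K + 1) * y)) / k !)) (Set.Ioo 0 t) := fun k =>
    (Continuous.integrableOn_Icc (by fun_prop)).mono_set Set.Ioo_subset_Icc_self
  have hnonneg : ∀ k : ℕ, 0 ≤ᵐ[volume.restrict (Set.Ioo 0 t)] fun y => exp (-K) * (K ^ k / k !) *
      ((K + 1) ^ (k + 1) * y ^ k * exp (-((K + 1) * y)) / k !) := fun k => by
    filter_upwards [ae_restrict_mem measurableSet_Ioo] with y hy
    have := hy.1
    positivity
  have hsummable : Summable fun k : ℕ => exp (-K) * (K ^ k / k !) *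
      (1 - poissonCDF ((K + 1) * t) k) := by
    refine ((hasSum_pow_div_factorial_exp K).summable.mul_left (exp (-K))).of_nonneg_of_le
      (fun k => ?_) (fun k => ?_)
    · exact mul_nonneg (by positivity) (sub_nonneg.2 (poissonCDF_le_one (by positivity) k))
    · exact mul_le_of_le_one_right (by positivity)
        (sub_le_self _ (poissonCDF_nonneg (by positivity) k))
  rw [setIntegral_congr_fun measurableSet_Ioo fun y hy => fR_eq_tsum hK hy.1,
    integral_tsum_of_nonneg hint hnonneg (hsummable.congr fun k => (hvalue k).symm),
    tsum_congr hvalue]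

theorem fG_natCast_add_one (n : ℕ) {x : ℝ} (hx : 0 < x) :
    fG (n + 1) x = (n + 1) ^ (n + 1) / n ! * (x ^ n * exp (-((n + 1) * x))) := by
  rw [fG, if_pos hx, add_sub_cancel_right, Real.Gamma_nat_eq_factorial, ← Nat.cast_add_one,
    Real.rpow_natCast, Real.rpow_natCast, neg_mul]
  push_cast
  ring

theorem fG_nonneg {s : ℝ} (hs : 0 ≤ s) (x : ℝ) : 0 ≤ fG s x := by
  unfold fG
  split_ifs with hx
  · have := Real.Gamma_nonneg_of_nonneg hs
    positivity
  · exact le_rfl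

theorem integral_fG_s3 (n : ℕ) : ∫ x in Set.Ioi 0, fG (n + 1) x = 1 := by
  rw [setIntegral_congr_fun measurableSet_Ioi fun x hx => fG_natCast_add_one n hx,
    integral_const_mul, integral_pow_mul_exp_neg_mul_Ioi n (by positivity)]
  field_simp

theorem integrableOn_fG_s3 (n : ℕ) : IntegrableOn (fG (n + 1)) (Set.Ioi 0) :=
  Integrable.of_integral_ne_zero (by rw [integral_fG_s3]; exact one_ne_zero)

theorem fG_mul_poissonCDF (n k : ℕ) (a : ℝ) {x : ℝ} (hx : 0 < x) :
    fG (n + 1) x * poissonCDF (a * x) k = ∑ j ∈ range (k + 1),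
      (n + 1) ^ (n + 1) * a ^ j / (n ! * j !) * (x ^ (n + j) * exp (-((n + 1 + a) * x))) := by
  rw [fG_natCast_add_one n hx, poissonCDF, mul_sum, mul_sum]
  refine sum_congr rfl fun j _ => ?_
  rw [show -((n + 1 + a) * x) = -((n + 1) * x) + -(a * x) by ring, exp_add]
  field_simp
  ring

theorem integrableOn_fG_mul_poissonCDF (n k : ℕ) {a : ℝ} (ha : 0 ≤ a) :
    IntegrableOn (fun x => fG (n + 1) x * poissonCDF (a * x) k) (Set.Ioi 0) :=
  IntegrableOn.congr_fun (integrable_finsetSum _ fun j _ =>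
      (integrableOn_pow_mul_exp_neg_mul_Ioi (n + j) (b := n + 1 + a) (by positivity)).const_mul _)
    (fun _ hx => (fG_mul_poissonCDF n k a hx).symm) measurableSet_Ioi

theorem integral_fG_mul_poissonCDF (n k : ℕ) {a : ℝ} (ha : 0 ≤ a) :
    ∫ x in Set.Ioi 0, fG (n + 1) x * poissonCDF (a * x) k
      = (n + 1) ^ (n + 1) / (n ! * (n + 1 + a) ^ (n + 1)) *
        ∑ j ∈ range (k + 1), ((n + j).descFactorial n : ℝ) * (a / (n + 1 + a)) ^ j := by
  have hB : (0 : ℝ) < n + 1 + a := by positivity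
  rw [setIntegral_congr_fun measurableSet_Ioi fun x hx => fG_mul_poissonCDF n k a hx,
    integral_finsetSum _ fun j _ =>
      (integrableOn_pow_mul_exp_neg_mul_Ioi (n + j) hB).const_mul _, mul_sum]
  refine sum_congr rfl fun j _ => ?_
  have hfact : ((n + j)! : ℝ) = j ! * (n + j).descFactorial n := by
    have := Nat.factorial_mul_descFactorial (n.le_add_right j)
    rw [Nat.add_sub_cancel_left] at this
    exact_mod_cast this.symm
  have hB' := hB.ne'
  rw [integral_const_mul, integral_pow_mul_exp_neg_mul_Ioi _ hB, hfact, div_pow]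
  field_simp
  ring

theorem integral_fG_mul_one_sub_poissonCDF (n k : ℕ) {a : ℝ} (ha : 0 ≤ a) :
    ∫ x in Set.Ioi 0, fG (n + 1) x * (1 - poissonCDF (a * x) k)
      = 1 - (n + 1) ^ (n + 1) / (n ! * (n + 1 + a) ^ (n + 1)) *
        ∑ j ∈ range (k + 1), ((n + j).descFactorial n : ℝ) * (a / (n + 1 + a)) ^ j := by
  simp_rw [mul_one_sub]
  rw [integral_sub (integrableOn_fG_s3 n) (integrableOn_fG_mul_poissonCDF n k ha), integral_fG_s3,
    integral_fG_mul_poissonCDF n k ha]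

theorem div_add_mem_Ico {a b : ℝ} (hb : 0 < b) (ha : 0 ≤ a) : a / (b + a) ∈ Set.Ico 0 1 :=
  ⟨by positivity, (div_lt_one (by positivity)).mpr (by linarith)⟩

theorem outage_eq_one_sub_tsum (n : ℕ) {K α : ℝ} (hK : 0 ≤ K) (hα : 0 ≤ α) :
    ∫ x in Set.Ioi 0, fG (n + 1) x * ∫ y in Set.Ioo 0 (α * x), fR K y
      = 1 - (n + 1) ^ (n + 1) * exp (-K) / (n ! * (n + 1 + α * (K + 1)) ^ (n + 1)) *
        ∑' k, K ^ k / k ! * ∑ j ∈ range (k + 1),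
          ((n + j).descFactorial n : ℝ) * (α * (K + 1) / (n + 1 + α * (K + 1))) ^ j := by
  set a := α * (K + 1)
  have ha : 0 ≤ a := by positivity
  set T : ℕ → ℝ := fun k => K ^ k / k ! * ∑ j ∈ range (k + 1),
    ((n + j).descFactorial n : ℝ) * (a / (n + 1 + a)) ^ j
  set C : ℝ := (n + 1) ^ (n + 1) / (n ! * (n + 1 + a) ^ (n + 1))
  have hinner : ∀ x ∈ Set.Ioi (0 : ℝ), fG (n + 1) x * ∫ y in Set.Ioo 0 (α * x), fR K y
      = ∑' k, exp (-K) * (K ^ k / k !) * (fG (n + 1) x * (1 - poissonCDF (a * x) k)) :=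
    fun x hx => by
      rw [integral_Ioo_fR hK (by have := hx.out; positivity), ← tsum_mul_left]
      refine tsum_congr fun k => ?_
      rw [show (K + 1) * (α * x) = a * x by ring]
      ring
  have hterm : ∀ k, ∫ x in Set.Ioi 0,
      exp (-K) * (K ^ k / k !) * (fG (n + 1) x * (1 - poissonCDF (a * x) k))
        = exp (-K) * (K ^ k / k !) - exp (-K) * C * T k := fun k => by
    rw [integral_const_mul, integral_fG_mul_one_sub_poissonCDF n k ha]
    ring
  have hint : ∀ k, IntegrableOn (fun x => exp (-K) * (K ^ k / k !) *
      (fG (n + 1) x * (1 - poissonCDF (a * x) k))) (Set.Ioi 0) := fun k => by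
    simp_rw [mul_one_sub]
    exact ((integrableOn_fG_s3 n).sub (integrableOn_fG_mul_poissonCDF n k ha)).const_mul _
  have hnonneg : ∀ k, 0 ≤ᵐ[volume.restrict (Set.Ioi 0)] fun x => exp (-K) * (K ^ k / k !) *
      (fG (n + 1) x * (1 - poissonCDF (a * x) k)) := fun k => by
    filter_upwards [ae_restrict_mem measurableSet_Ioi] with x hx
    have := fG_nonneg (by positivity : (0 : ℝ) ≤ n + 1) x
    have := sub_nonneg.2 (poissonCDF_le_one (by have := hx.out; positivity : 0 ≤ a * x) k)
    positivity
  have hθ := div_add_mem_Ico (b := n + 1) (by positivity) ha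
  have hT : Summable T := summable_pow_div_factorial_mul_sum_descFactorial le_rfl K _
    (abs_le.mpr ⟨by linarith [hθ.1], hθ.2.le⟩)
  have hpoisson := (hasSum_pow_div_factorial_exp K).summable.mul_left (exp (-K))
  have hsummable := (hpoisson.sub (hT.mul_left (exp (-K) * C))).congr fun k => (hterm k).symm
  rw [setIntegral_congr_fun measurableSet_Ioi hinner,
    integral_tsum_of_nonneg hint hnonneg hsummable,
    tsum_congr hterm, hpoisson.tsum_sub (hT.mul_left _), tsum_mul_left, tsum_mul_left,
    (hasSum_pow_div_factorial_exp K).tsum_eq, ← exp_add, neg_add_cancel, exp_zero]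
  ring

/-- Lemma 1: closed-form outage probability `O_{L,N}(α)` in terms of the `(m−1)`-st
derivative of `θ ↦ θ^{m−1}(e^K − θ e^{Kθ})/(1−θ)` evaluated at `θ₀ = α(K+1)/(m+α(K+1))`. -/
theorem outage_L_N_closed_form (m : ℕ) (hm : 0 < m) (K α : ℝ) (hK : 0 ≤ K) (hα : 0 < α) :
    (∫ x in Set.Ioi (0 : ℝ), fG (m : ℝ) x * ∫ y in Set.Ioo 0 (α * x), fR K y) =
      1 - ((m : ℝ) ^ (m : ℕ) * Real.exp (-K) /
            (Real.Gamma m * ((m : ℝ) + α * (K + 1)) ^ (m : ℕ))) *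
        iteratedDeriv (m - 1)
          (fun θ : ℝ => θ ^ (m - 1) * (Real.exp K - θ * Real.exp (K * θ)) / (1 - θ))
          (α * (K + 1) / ((m : ℝ) + α * (K + 1))) := by
  obtain ⟨n, rfl⟩ := Nat.exists_eq_add_one_of_ne_zero hm.ne'
  have hθ₀ := div_add_mem_Ico (b := n + 1) (by positivity) (by positivity : 0 ≤ α * (K + 1))
  have hθ : α * (K + 1) / (n + 1 + α * (K + 1)) ∈ Set.Ioo (-1 : ℝ) 1 :=
    ⟨by linarith [hθ₀.1], hθ₀.2⟩
  push_cast
  rw [outage_eq_one_sub_tsum n hK hα.le,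
    iteratedDeriv_eq_tsum_descFactorial n K hθ, Real.Gamma_nat_eq_factorial]
end

section
/- For every constant c > 0, the function u : (0, ∞) → ℝ defined by u(γ) = c · (1 − (1+γ)^{−2})^{−1/2} · ln(1 + γ) is strictly monotonically increasing on (0, ∞). -/
open Real

/-- Appendix C: for `c > 0`, the function
`u(γ) = c (1 − (1+γ)^{−2})^{−1/2} ln(1+γ)` is strictly increasing on `(0, ∞)`. -/
theorem u_strict_mono (c : ℝ) (hc : 0 < c) :
    StrictMonoOn
      (fun γ : ℝ => c * (1 - ((1 + γ) ^ 2)⁻¹) ^ (-(1 : ℝ) / 2) * Real.log (1 + γ))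
      (Set.Ioi 0) := by
  have key : ∀ γ ∈ Set.Ioi (0:ℝ), ∃ d : ℝ,
      HasDerivAt (fun γ : ℝ => c * (1 - ((1 + γ) ^ 2)⁻¹) ^ (-(1 : ℝ) / 2) * Real.log (1 + γ)) d γ
      ∧ 0 < d := by
    intro γ hγ
    have hγ0 : (0:ℝ) < γ := hγ
    set t : ℝ := 1 + γ with ht_def
    have ht1 : 1 < t := by simp [ht_def]; linarith
    have ht0 : 0 < t := by linarith
    have htne : t ≠ 0 := ne_of_gt ht0
    have ht2 : 1 < t ^ 2 := by nlinarith
    have ht2ne : (t:ℝ) ^ 2 ≠ 0 := by positivity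
    have hh : 0 < 1 - (t ^ 2)⁻¹ := by
      have : (t ^ 2)⁻¹ < 1 := by
        rw [inv_lt_one_iff₀]; right; exact ht2
      linarith
    have hhne : (1 - (t ^ 2)⁻¹) ≠ 0 := ne_of_gt hh
    have h1 : HasDerivAt (fun γ : ℝ => 1 + γ) 1 γ := by
      simpa using (hasDerivAt_id γ).const_add (1:ℝ)
    have h2 : HasDerivAt (fun γ : ℝ => (1 + γ) ^ 2) ((2:ℕ) * (1 + γ) ^ (2-1) * 1) γ :=
      h1.pow 2
    have h3 : HasDerivAt (fun γ : ℝ => ((1 + γ) ^ 2)⁻¹)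
        (-(((2:ℕ) * (1 + γ) ^ (2-1) * 1)) / ((1 + γ) ^ 2) ^ 2) γ :=
      h2.inv (by simpa [ht_def] using ht2ne)
    have h4 : HasDerivAt (fun γ : ℝ => 1 - ((1 + γ) ^ 2)⁻¹)
        (-(-(((2:ℕ) * (1 + γ) ^ (2-1) * 1)) / ((1 + γ) ^ 2) ^ 2)) γ :=
      h3.const_sub 1
    have h5 : HasDerivAt (fun γ : ℝ => (1 - ((1 + γ) ^ 2)⁻¹) ^ (-(1 : ℝ) / 2))
        ((-(-(((2:ℕ) * (1 + γ) ^ (2-1) * 1)) / ((1 + γ) ^ 2) ^ 2)) * (-(1 : ℝ) / 2)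
          * (1 - ((1 + γ) ^ 2)⁻¹) ^ ((-(1 : ℝ) / 2) - 1)) γ :=
      h4.rpow_const (Or.inl (by simpa [ht_def] using hhne))
    have h6 : HasDerivAt (fun γ : ℝ => Real.log (1 + γ)) (1 / (1 + γ)) γ :=
      h1.log (by simpa [ht_def] using htne)
    have h7 := ((h5.const_mul c).mul h6)
    refine ⟨_, h7, ?_⟩
    -- positivity of the derivative
    have hts : (1 + γ) = t := ht_def.symm
    rw [hts]
    have hpow : (1 - (t ^ 2)⁻¹) ^ ((-(1 : ℝ) / 2) - 1)
        = (1 - (t ^ 2)⁻¹) ^ (-(1 : ℝ) / 2) / (1 - (t ^ 2)⁻¹) := by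
      rw [Real.rpow_sub hh, Real.rpow_one]
    rw [hpow]
    have hlog : Real.log t < t ^ 2 - 1 := by
      have h' : Real.log t < t - 1 := Real.log_lt_sub_one_of_pos ht0 (ne_of_gt ht1)
      nlinarith
    have hrp : 0 < (1 - (t ^ 2)⁻¹) ^ (-(1 : ℝ) / 2) := Real.rpow_pos_of_pos hh _
    have ht2m : 0 < t ^ 2 - 1 := by linarith
    have heq : c * (-(-(((2:ℕ) * t ^ (2-1) * 1)) / (t ^ 2) ^ 2) * (-(1 : ℝ) / 2)
          * ((1 - (t ^ 2)⁻¹) ^ (-(1 : ℝ) / 2) / (1 - (t ^ 2)⁻¹))) * Real.log t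
        + c * (1 - (t ^ 2)⁻¹) ^ (-(1 : ℝ) / 2) * (1 / t)
        = c * (1 - (t ^ 2)⁻¹) ^ (-(1 : ℝ) / 2)
          * ((t ^ 2 - 1 - Real.log t) / (t * (t ^ 2 - 1))) := by
      have h8 : (1 - (t ^ 2)⁻¹) = (t ^ 2 - 1) / t ^ 2 := by field_simp
      rw [h8]
      field_simp
      ring
    rw [heq]
    have : 0 < (t ^ 2 - 1 - Real.log t) / (t * (t ^ 2 - 1)) := by
      apply div_pos (by linarith) (by positivity)
    positivity
  have hcont : ContinuousOn
      (fun γ : ℝ => c * (1 - ((1 + γ) ^ 2)⁻¹) ^ (-(1 : ℝ) / 2) * Real.log (1 + γ))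
      (Set.Ioi 0) := fun x hx => by
    obtain ⟨d, hd, _⟩ := key x hx
    exact hd.continuousAt.continuousWithinAt
  refine strictMonoOn_of_deriv_pos (convex_Ioi 0) hcont ?_
  intro x hx
  rw [interior_Ioi] at hx
  obtain ⟨d, hd, hdpos⟩ := key x hx
  rw [hd.deriv]
  exact hdpos
end
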